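/- Let b ∈ Δ_d^{>0} and let θ ∈ Δ_d^{>0} be the solution of the Risk Budgeting problem RB_b for a convex, positively homogeneous risk function R positive on the simplex. Then R(θ) ≤ R(b). More precisely, R(θ) ≤ R(b) − (1/λ) Σᵢ bᵢ log(bᵢ/θᵢ) ≤ R(b), where λ = Σᵢ y*ᵢ and y* is the minimizer of y ↦ R(y) − Σᵢ bᵢ log yᵢ. -/

import Mathlib

/-!
The function `Γ(y) = R(y) - ∑ bᵢ log yᵢ` is strictly convex on the positive orthant. Positive
homogeneity makes the gradient of `R` invariant under scaling, so the Risk Budgeting condition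
`θᵢ ∂ᵢR(θ) = bᵢ R(θ)` says exactly that `R(θ)⁻¹ θ` is a critical point, hence the unique
minimiser, of `Γ`. Thus `y* = R(θ)⁻¹ θ` and `λ = R(θ)⁻¹`. Comparing `Γ(λ θ) ≤ Γ(λ b)` and using
homogeneity once more gives `R(θ) (1 + ∑ bᵢ log (bᵢ/θᵢ)) ≤ R(b)`; the relative entropy is
nonnegative.
-/

open Set Real Filter Topology

section PositiveOrthant

variable {ι : Type*}

theorem setOf_forall_pos_eq_pi :
    {y : ι → ℝ | ∀ i, 0 < y i} = Set.univ.pi fun _ => Ioi (0 : ℝ) := by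
  ext y; simp

theorem isOpen_setOf_forall_pos [Finite ι] : IsOpen {y : ι → ℝ | ∀ i, 0 < y i} := by
  rw [setOf_forall_pos_eq_pi]; exact isOpen_set_pi finite_univ fun _ _ => isOpen_Ioi

theorem convex_setOf_forall_pos : Convex ℝ {y : ι → ℝ | ∀ i, 0 < y i} := by
  rw [setOf_forall_pos_eq_pi]; exact convex_pi fun _ _ => convex_Ioi 0

theorem strictConcaveOn_sum_mul_log [Fintype ι] {b : ι → ℝ} (hb : ∀ i, 0 < b i) :
    StrictConcaveOn ℝ {y : ι → ℝ | ∀ i, 0 < y i} fun y => ∑ i, b i * log (y i) := by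
  refine ⟨convex_setOf_forall_pos, fun x hx y hy hxy s t hs ht hst => ?_⟩
  obtain ⟨j, hj⟩ := Function.ne_iff.mp hxy
  have hterm : ∀ i, s * log (x i) + t * log (y i) ≤ log (s * x i + t * y i) := fun i =>
    strictConcaveOn_log_Ioi.concaveOn.2 (hx i) (hy i) hs.le ht.le hst
  have hterm_j : s * log (x j) + t * log (y j) < log (s * x j + t * y j) :=
    strictConcaveOn_log_Ioi.2 (hx j) (hy j) hj hs ht hst
  simp only [smul_eq_mul, Pi.add_apply, Pi.smul_apply, Finset.mul_sum, ← Finset.sum_add_distrib]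
  refine Finset.sum_lt_sum (fun i _ => ?_) ⟨j, Finset.mem_univ j, ?_⟩
  · nlinarith [mul_le_mul_of_nonneg_left (hterm i) (hb i).le]
  · nlinarith [mul_lt_mul_of_pos_left hterm_j (hb j)]

theorem sum_mul_log_div_nonneg [Fintype ι] {b θ : ι → ℝ} (hb : ∀ i, 0 < b i) (hθ : ∀ i, 0 < θ i)
    (hsum : ∑ i, θ i ≤ ∑ i, b i) : 0 ≤ ∑ i, b i * log (b i / θ i) := by
  have hterm : ∀ i, b i - θ i ≤ b i * log (b i / θ i) := fun i => by
    have h := one_sub_inv_le_log_of_pos (div_pos (hb i) (hθ i))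
    rw [inv_div] at h
    calc b i - θ i = b i * (1 - θ i / b i) := by field_simp [(hb i).ne']
      _ ≤ b i * log (b i / θ i) := mul_le_mul_of_nonneg_left h (hb i).le
  calc (0 : ℝ) ≤ ∑ i, (b i - θ i) := by rw [Finset.sum_sub_distrib]; linarith
    _ ≤ _ := Finset.sum_le_sum fun i _ => hterm i

theorem sum_mul_log_smul [Fintype ι] {b y : ι → ℝ} {t : ℝ} (ht : 0 < t) (hy : ∀ i, 0 < y i) :
    ∑ i, b i * log ((t • y) i) = (∑ i, b i) * log t + ∑ i, b i * log (y i) := by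
  simp only [Pi.smul_apply, smul_eq_mul, log_mul ht.ne' (hy _).ne', mul_add,
    Finset.sum_add_distrib, Finset.sum_mul]

theorem hasFDerivAt_sum_mul_log [Fintype ι] (b : ι → ℝ) {c : ι → ℝ} (hc : ∀ i, c i ≠ 0) :
    HasFDerivAt (fun y : ι → ℝ => ∑ i, b i * log (y i))
      (∑ i, (b i / c i) • (ContinuousLinearMap.proj i : (ι → ℝ) →L[ℝ] ℝ)) c := by
  refine HasFDerivAt.fun_sum (u := Finset.univ) fun i _ => ?_
  rw [div_eq_mul_inv, ← smul_smul]
  exact ((hasDerivAt_log (hc i)).comp_hasFDerivAt c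
    (hasFDerivAt_apply (𝕜 := ℝ) i c)).const_mul (b i)

end PositiveOrthant

section Calculus

variable {E : Type*} [NormedAddCommGroup E] [NormedSpace ℝ E]

theorem ConvexOn.isMinOn_of_hasFDerivAt_eq_zero {s : Set E} {f : E → ℝ} {c : E}
    (hf : ConvexOn ℝ s f) (hc : c ∈ s) (hd : HasFDerivAt f (0 : E →L[ℝ] ℝ) c) :
    IsMinOn f s c := by
  intro z hz
  set φ : ℝ → ℝ := f ∘ AffineMap.lineMap c z
  have hφ : ConvexOn ℝ (Icc 0 1) φ :=
    (hf.comp_affineMap _).subset (fun t ht => hf.1.lineMap_mem hc hz ht) (convex_Icc 0 1)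
  have hφ' : HasDerivAt φ 0 0 := by
    rw [← AffineMap.lineMap_apply_zero c z (k := ℝ)] at hd
    simpa using hd.comp_hasDerivAt 0 AffineMap.hasDerivAt_lineMap
  have := hφ.le_slope_of_hasDerivAt (by simp) (by simp) one_pos hφ'
  simpa [φ, slope_def_field] using this

theorem fderiv_smul_eq_of_eventually_homogeneous {f : E → ℝ} {x : E} {t : ℝ} (ht : t ≠ 0)
    (hhom : ∀ᶠ y in 𝓝 x, f (t • y) = t * f y) (hx : DifferentiableAt ℝ f x)
    (htx : DifferentiableAt ℝ f (t • x)) : fderiv ℝ f (t • x) = fderiv ℝ f x := by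
  have h₁ : HasFDerivAt (fun y => f (t • y))
      ((fderiv ℝ f (t • x)).comp (t • ContinuousLinearMap.id ℝ E)) x :=
    htx.hasFDerivAt.comp x ((hasFDerivAt_id x).const_smul t)
  have h₂ : HasFDerivAt (fun y => f (t • y)) (t • fderiv ℝ f x) x :=
    (hx.hasFDerivAt.const_mul t).congr_of_eventuallyEq hhom
  ext v
  have hv := congrArg (· v) (h₁.unique h₂)
  simp only [ContinuousLinearMap.comp_apply, smul_apply,
    ContinuousLinearMap.id_apply, map_smul, smul_eq_mul] at hv
  exact mul_left_cancel₀ ht hv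

end Calculus

noncomputable def riskBudgetingObjective {ι : Type*} [Fintype ι] (R : (ι → ℝ) → ℝ)
    (b y : ι → ℝ) : ℝ :=
  R y - ∑ i, b i * log (y i)

section RiskBudgeting

variable {ι : Type*} [Fintype ι] {R : (ι → ℝ) → ℝ} {b θ : ι → ℝ}

theorem strictConvexOn_riskBudgetingObjective (hR : ConvexOn ℝ {y : ι → ℝ | ∀ i, 0 < y i} R)
    (hb : ∀ i, 0 < b i) :
    StrictConvexOn ℝ {y : ι → ℝ | ∀ i, 0 < y i} (riskBudgetingObjective R b) := by
  have h : riskBudgetingObjective R b = R + -fun y => ∑ i, b i * log (y i) := by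
    funext y; simp [riskBudgetingObjective, sub_eq_add_neg]
  rw [h]
  exact hR.add_strictConvexOn (strictConcaveOn_sum_mul_log hb).neg

theorem riskBudgetingObjective_smul {y : ι → ℝ} {t : ℝ} (ht : 0 < t) (hy : ∀ i, 0 < y i)
    (hR : R (t • y) = t * R y) :
    riskBudgetingObjective R b (t • y) =
      t * R y - (∑ i, b i) * log t - ∑ i, b i * log (y i) := by
  rw [riskBudgetingObjective, hR, sum_mul_log_smul ht hy]
  ring

theorem hasFDerivAt_riskBudgetingObjective_eq_zero [DecidableEq ι] (hθ : ∀ i, 0 < θ i)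
    (hRθ : 0 < R θ) (hRB : ∀ i, θ i * fderiv ℝ R θ (Pi.single i 1) = b i * R θ)
    (hdiff : DifferentiableAt ℝ R ((R θ)⁻¹ • θ))
    (hgrad : fderiv ℝ R ((R θ)⁻¹ • θ) = fderiv ℝ R θ) :
    HasFDerivAt (riskBudgetingObjective R b) (0 : (ι → ℝ) →L[ℝ] ℝ) ((R θ)⁻¹ • θ) := by
  have hc : ∀ i, ((R θ)⁻¹ • θ) i ≠ 0 := fun i => (mul_pos (inv_pos.2 hRθ) (hθ i)).ne'
  have hgrad' : fderiv ℝ R ((R θ)⁻¹ • θ) =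
      ∑ i, (b i / ((R θ)⁻¹ • θ) i) • (ContinuousLinearMap.proj i : (ι → ℝ) →L[ℝ] ℝ) := by
    refine ContinuousLinearMap.coe_injective ((Pi.basisFun ℝ ι).ext fun i => ?_)
    have hRBi : fderiv ℝ R θ (Pi.single i 1) = b i / ((R θ)⁻¹ * θ i) := by
      field_simp [(hθ i).ne', hRθ.ne']
      linarith [hRB i]
    simpa [hgrad, Pi.single_apply] using hRBi
  have h := hdiff.hasFDerivAt.sub (hasFDerivAt_sum_mul_log b hc)
  rwa [← hgrad', sub_self] at h

theorem isMinOn_riskBudgetingObjective [DecidableEq ι]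
    (hRdiff : DifferentiableOn ℝ R {y : ι → ℝ | ∀ i, 0 < y i})
    (hhom : ∀ y : ι → ℝ, (∀ i, 0 < y i) → ∀ t : ℝ, 0 < t → R (t • y) = t * R y)
    (hΓ : ConvexOn ℝ {y : ι → ℝ | ∀ i, 0 < y i} (riskBudgetingObjective R b))
    (hθ : ∀ i, 0 < θ i) (hRθ : 0 < R θ)
    (hRB : ∀ i, θ i * fderiv ℝ R θ (Pi.single i 1) = b i * R θ) :
    IsMinOn (riskBudgetingObjective R b) {y | ∀ i, 0 < y i} ((R θ)⁻¹ • θ) := by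
  have hdiff : ∀ y : ι → ℝ, (∀ i, 0 < y i) → DifferentiableAt ℝ R y := fun y hy =>
    hRdiff.differentiableAt (isOpen_setOf_forall_pos.mem_nhds hy)
  have hc : ∀ i, 0 < ((R θ)⁻¹ • θ) i := fun i => mul_pos (inv_pos.2 hRθ) (hθ i)
  have hgrad : fderiv ℝ R ((R θ)⁻¹ • θ) = fderiv ℝ R θ := by
    have h := fderiv_smul_eq_of_eventually_homogeneous hRθ.ne'
      (eventually_of_mem (isOpen_setOf_forall_pos.mem_nhds hc) fun y hy => hhom y hy _ hRθ)
      (hdiff _ hc) (by rw [smul_inv_smul₀ hRθ.ne']; exact hdiff θ hθ)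
    rw [smul_inv_smul₀ hRθ.ne'] at h
    exact h.symm
  exact hΓ.isMinOn_of_hasFDerivAt_eq_zero hc
    (hasFDerivAt_riskBudgetingObjective_eq_zero hθ hRθ hRB (hdiff _ hc) hgrad)

theorem risk_mul_one_add_sum_mul_log_div_le
    (hhom : ∀ y : ι → ℝ, (∀ i, 0 < y i) → ∀ t : ℝ, 0 < t → R (t • y) = t * R y)
    (hb : ∀ i, 0 < b i) (hθ : ∀ i, 0 < θ i) (hRθ : 0 < R θ)
    (hmin : IsMinOn (riskBudgetingObjective R b) {y | ∀ i, 0 < y i} ((R θ)⁻¹ • θ)) :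
    R θ * (1 + ∑ i, b i * log (b i / θ i)) ≤ R b := by
  have hkey : riskBudgetingObjective R b ((R θ)⁻¹ • θ) ≤
      riskBudgetingObjective R b ((R θ)⁻¹ • b) :=
    hmin fun i => mul_pos (inv_pos.2 hRθ) (hb i)
  rw [riskBudgetingObjective_smul (inv_pos.2 hRθ) hθ (hhom θ hθ _ (inv_pos.2 hRθ)),
    riskBudgetingObjective_smul (inv_pos.2 hRθ) hb (hhom b hb _ (inv_pos.2 hRθ)),
    inv_mul_cancel₀ hRθ.ne'] at hkey
  have hKL : ∑ i, b i * log (b i / θ i) = ∑ i, b i * log (b i) - ∑ i, b i * log (θ i) := by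
    simp only [log_div (hb _).ne' (hθ _).ne', mul_sub, Finset.sum_sub_distrib]
  rw [← le_inv_mul_iff₀ hRθ]
  linarith

end RiskBudgeting

theorem RB_risk_le_budget_risk_general {d : ℕ}
    (R : (Fin d → ℝ) → ℝ)
    (hRdiff : ContDiffOn ℝ 1 R {y : Fin d → ℝ | ∀ i, 0 < y i})
    (hRconv : ConvexOn ℝ {y : Fin d → ℝ | ∀ i, 0 ≤ y i} R)
    (hRhom : ∀ (y : Fin d → ℝ), (∀ i, 0 ≤ y i) → ∀ l : ℝ, 0 ≤ l →
      R (fun i => l * y i) = l * R y)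
    (hRpos : ∀ y : Fin d → ℝ, (∀ i, 0 ≤ y i) → (∑ i, y i) = 1 → 0 < R y)
    (b : Fin d → ℝ) (hb : ∀ i, 0 < b i) (hbsum : ∑ i, b i = 1)
    (θ : Fin d → ℝ) (hθ : ∀ i, 0 < θ i) (hθsum : ∑ i, θ i = 1)
    (hθRB : ∀ i, θ i * fderiv ℝ R θ (Pi.single i 1) = b i * R θ)
    (ystar : Fin d → ℝ) (hystar : ∀ i, 0 < ystar i)
    (hmin : ∀ z : Fin d → ℝ, (∀ i, 0 < z i) →
      R ystar - ∑ i, b i * Real.log (ystar i) ≤ R z - ∑ i, b i * Real.log (z i)) :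
    R θ ≤ R b - (1 / ∑ i, ystar i) * ∑ i, b i * Real.log (b i / θ i) ∧
    R b - (1 / ∑ i, ystar i) * ∑ i, b i * Real.log (b i / θ i) ≤ R b := by
  have hhom : ∀ y : Fin d → ℝ, (∀ i, 0 < y i) → ∀ t : ℝ, 0 < t → R (t • y) = t * R y :=
    fun y hy t ht => hRhom y (fun i => (hy i).le) t ht.le
  have hRθ : 0 < R θ := hRpos θ (fun i => (hθ i).le) hθsum
  have hΓ := strictConvexOn_riskBudgetingObjective
    (hRconv.subset (fun y hy i => (hy i).le) convex_setOf_forall_pos) hb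
  have hc_min := isMinOn_riskBudgetingObjective (hRdiff.differentiableOn one_ne_zero) hhom
    hΓ.convexOn hθ hRθ hθRB
  have hystar_eq : ystar = (R θ)⁻¹ • θ :=
    hΓ.eq_of_isMinOn (fun z hz => hmin z hz) hc_min hystar
      fun i => mul_pos (inv_pos.2 hRθ) (hθ i)
  have hsum_ystar : ∑ i, ystar i = (R θ)⁻¹ := by
    simp [hystar_eq, ← Finset.mul_sum, hθsum]
  have hbound := risk_mul_one_add_sum_mul_log_div_le hhom hb hθ hRθ hc_min
  have hKL_nonneg := sum_mul_log_div_nonneg hb hθ (hθsum.trans hbsum.symm).le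
  rw [mul_one_add] at hbound
  rw [hsum_ystar, one_div, inv_inv]
  constructor <;> linarith [mul_nonneg hRθ.le hKL_nonneg]

/-- The Risk Budgeting portfolio has a smaller risk than the portfolio whose weights are
the risk budgets: `R(θ) ≤ R(b) - (1/λ) ∑ bᵢ log (bᵢ/θᵢ) ≤ R(b)` where `λ = ∑ y*ᵢ` and
`y*` minimizes `y ↦ R(y) - ∑ bᵢ log yᵢ`. -/
theorem RB_risk_le_budget_risk {d : ℕ} (hd : 0 < d)
    (R : (Fin d → ℝ) → ℝ)
    (hRcont : ContinuousOn R {y : Fin d → ℝ | ∀ i, 0 ≤ y i})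
    (hRdiff : ContDiffOn ℝ 1 R {y : Fin d → ℝ | ∀ i, 0 < y i})
    (hRconv : ConvexOn ℝ {y : Fin d → ℝ | ∀ i, 0 ≤ y i} R)
    (hRhom : ∀ (y : Fin d → ℝ), (∀ i, 0 ≤ y i) → ∀ l : ℝ, 0 ≤ l →
      R (fun i => l * y i) = l * R y)
    (hRpos : ∀ y : Fin d → ℝ, (∀ i, 0 ≤ y i) → (∑ i, y i) = 1 → 0 < R y)
    (b : Fin d → ℝ) (hb : ∀ i, 0 < b i) (hbsum : ∑ i, b i = 1)
    (θ : Fin d → ℝ) (hθ : ∀ i, 0 < θ i) (hθsum : ∑ i, θ i = 1)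
    (hθRB : ∀ i, θ i * fderiv ℝ R θ (Pi.single i 1) = b i * R θ)
    (ystar : Fin d → ℝ) (hystar : ∀ i, 0 < ystar i)
    (hmin : ∀ z : Fin d → ℝ, (∀ i, 0 < z i) →
      R ystar - ∑ i, b i * Real.log (ystar i) ≤ R z - ∑ i, b i * Real.log (z i)) :
    R θ ≤ R b - (1 / ∑ i, ystar i) * ∑ i, b i * Real.log (b i / θ i) ∧
    R b - (1 / ∑ i, ystar i) * ∑ i, b i * Real.log (b i / θ i) ≤ R b :=
  RB_risk_le_budget_risk_general R hRdiff hRconv hRhom hRpos b hb hbsum θ hθ hθsum hθRB ystar hystar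
    hmin
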